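/- For any category C, the interleaving distance d_Int is an extended pseudometric on functors ℝ ⥤ C: for all U, V, W : ℝ ⥤ C one has d_Int(U, U) = 0, d_Int(U, V) = d_Int(V, U), and d_Int(U, W) ≤ d_Int(U, V) + d_Int(V, W). -/

import Mathlib

open CategoryTheory CategoryTheory.Limits

noncomputable section

/-- Translation functor `T_e : a ↦ a + e` on `ℝ`, viewed as a preorder category. -/
def Tr (e : ℝ) : ℝ ⥤ ℝ :=
  Monotone.functor (f := fun a : ℝ => a + e) (fun _ _ h => by dsimp only; linarith)

@[simp] theorem Tr_obj (e a : ℝ) : (Tr e).obj a = a + e := rfl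

theorem Tr_comp (e f : ℝ) : Tr e ⋙ Tr f = Tr (e + f) :=
  CategoryTheory.Functor.ext (fun a => add_assoc a e f) (fun _ _ _ => Subsingleton.elim _ _)

/-- The canonical natural transformation `U σ_e : U ⟶ U T_e` for `0 ≤ e`,
whose component at `a` is `U` applied to `a ≤ a + e`. -/
def sigmaNat {C : Type*} [Category C] (U : ℝ ⥤ C) (e : ℝ) (he : 0 ≤ e) :
    U ⟶ Tr e ⋙ U where
  app a := U.map (homOfLE (le_add_of_nonneg_right he))
  naturality a b f := by
    dsimp [Tr]
    rw [← Functor.map_comp, ← Functor.map_comp]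
    exact congrArg U.map (Subsingleton.elim _ _)

/-- `(Φ, Ψ)` is an `e`-interleaving of `U` and `V`:
`(Ψ whiskered by T_e) ∘ Φ = U σ_{2e}` and `(Φ whiskered by T_e) ∘ Ψ = V σ_{2e}`
(the `eqToHom` transports along the equality of functors `T_{2e} = T_e ⋙ T_e`). -/
def IsInterleaving {C : Type*} [Category C] (e : ℝ) (he : 0 ≤ e) (U V : ℝ ⥤ C)
    (Φ : U ⟶ Tr e ⋙ V) (Ψ : V ⟶ Tr e ⋙ U) : Prop :=
  Φ ≫ Functor.whiskerLeft (Tr e) Ψ =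
      sigmaNat U (2 * e) (by linarith) ≫ eqToHom (by rw [two_mul, ← Tr_comp, Functor.assoc]) ∧
    Ψ ≫ Functor.whiskerLeft (Tr e) Φ =
      sigmaNat V (2 * e) (by linarith) ≫ eqToHom (by rw [two_mul, ← Tr_comp, Functor.assoc])

/-- `U` and `V` are `e`-interleaved. -/
def Interleaved {C : Type*} [Category C] (e : ℝ) (U V : ℝ ⥤ C) : Prop :=
  ∃ (he : 0 ≤ e) (Φ : U ⟶ Tr e ⋙ V) (Ψ : V ⟶ Tr e ⋙ U), IsInterleaving e he U V Φ Ψ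

/-- The interleaving distance: the infimum in `[0,∞]` of the set of `e ≥ 0` such that
`U` and `V` are `e`-interleaved (`∞` if this set is empty). -/
noncomputable def dInt {C : Type*} [Category C] (U V : ℝ ⥤ C) : ENNReal :=
  sInf (ENNReal.ofReal '' {e : ℝ | Interleaved e U V})

/-!
Interleavings compose: if `(Φ, Ψ)` is an `e`-interleaving of `U, V` and `(Φ', Ψ')` an
`f`-interleaving of `V, W`, then `Φ' ∘ Φ` and `Ψ ∘ Ψ'` form an `(e + f)`-interleaving of `U, W`,
by naturality of `Ψ` and `Ψ'` and functoriality of `U`, `V`. With the self-interleaving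
`(U σ_e, U σ_e)` and the symmetry of the definition, the pseudometric axioms follow on passing
to infima. Since `ℝ` is thin, every `eqToHom` between shifted objects is the image of an
inequality, so all identities reduce to composing such images.
-/

theorem ENNReal.sInf_image_ofReal_le_add {S T R : Set ℝ} (h : ∀ x ∈ S, ∀ y ∈ T, x + y ∈ R) :
    sInf (ENNReal.ofReal '' R) ≤ sInf (ENNReal.ofReal '' S) + sInf (ENNReal.ofReal '' T) := by
  rw [ENNReal.sInf_add]
  refine le_iInf₂ ?_
  rintro _ ⟨x, hx, rfl⟩
  rw [ENNReal.add_sInf]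
  refine le_iInf₂ ?_
  rintro _ ⟨y, hy, rfl⟩
  exact (sInf_le (Set.mem_image_of_mem _ (h x hx y hy))).trans ENNReal.ofReal_add_le

section

variable {C : Type*} [Category C]

theorem eqToHom_eq_map_homOfLE (U : ℝ ⥤ C) {x y : ℝ} (h : x = y) (p : U.obj x = U.obj y) :
    eqToHom p = U.map (homOfLE h.le) := by
  subst h
  exact (U.map_id x).symm

theorem map_homOfLE_comp_map_homOfLE (U : ℝ ⥤ C) {x y z : ℝ} (hxy : x ≤ y) (hyz : y ≤ z) :
    U.map (homOfLE hxy) ≫ U.map (homOfLE hyz) = U.map (homOfLE (hxy.trans hyz)) :=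
  (U.map_comp _ _).symm

theorem map_homOfLE_comp_app {U V : ℝ ⥤ C} {e : ℝ} (α : U ⟶ Tr e ⋙ V) {x y : ℝ} (h : x ≤ y) :
    U.map (homOfLE h) ≫ α.app y =
      α.app x ≫ V.map (homOfLE (by simpa using h : (Tr e).obj x ≤ (Tr e).obj y)) :=
  α.naturality _

theorem comp_whiskerLeft_eq_sigmaNat_iff {U V : ℝ ⥤ C} {e : ℝ} (he : 0 ≤ e)
    (Φ : U ⟶ Tr e ⋙ V) (Ψ : V ⟶ Tr e ⋙ U) (h : Tr (2 * e) ⋙ U = Tr e ⋙ Tr e ⋙ U) :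
    Φ ≫ Functor.whiskerLeft (Tr e) Ψ = sigmaNat U (2 * e) (by linarith) ≫ eqToHom h ↔
      ∀ a : ℝ, Φ.app a ≫ Ψ.app ((Tr e).obj a) =
        U.map (homOfLE (by simp; linarith : a ≤ (Tr e).obj ((Tr e).obj a))) := by
  rw [NatTrans.ext_iff, funext_iff]
  refine forall_congr' fun a => Eq.congr_right ?_
  rw [NatTrans.comp_app, eqToHom_app, eqToHom_eq_map_homOfLE U
    (show (Tr (2 * e)).obj a = (Tr e).obj ((Tr e).obj a) by simp only [Tr_obj]; ring)]
  exact (U.map_comp _ _).symm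

-- Components are indexed by `(Tr e).obj a` rather than `a + e`: the two agree only after
-- unfolding `Tr`, so composites written with `a + e` defeat `rw` and `simp`.
theorem isInterleaving_iff {U V : ℝ ⥤ C} {e : ℝ} (he : 0 ≤ e)
    (Φ : U ⟶ Tr e ⋙ V) (Ψ : V ⟶ Tr e ⋙ U) :
    IsInterleaving e he U V Φ Ψ ↔
      (∀ a : ℝ, Φ.app a ≫ Ψ.app ((Tr e).obj a) =
        U.map (homOfLE (by simp; linarith : a ≤ (Tr e).obj ((Tr e).obj a)))) ∧
      (∀ a : ℝ, Ψ.app a ≫ Φ.app ((Tr e).obj a) =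
        V.map (homOfLE (by simp; linarith : a ≤ (Tr e).obj ((Tr e).obj a)))) :=
  and_congr (comp_whiskerLeft_eq_sigmaNat_iff he Φ Ψ _) (comp_whiskerLeft_eq_sigmaNat_iff he Ψ Φ _)

def shiftComp {U V W : ℝ ⥤ C} {e f g : ℝ} (hg : e + f = g)
    (Φ : U ⟶ Tr e ⋙ V) (Φ' : V ⟶ Tr f ⋙ W) : U ⟶ Tr g ⋙ W :=
  Φ ≫ Functor.whiskerLeft (Tr e) Φ' ≫ eqToHom (by rw [← hg, ← Tr_comp, Functor.assoc])

theorem shiftComp_app {U V W : ℝ ⥤ C} {e f g : ℝ} (hg : e + f = g)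
    (Φ : U ⟶ Tr e ⋙ V) (Φ' : V ⟶ Tr f ⋙ W) (a : ℝ) :
    (shiftComp hg Φ Φ').app a = Φ.app a ≫ Φ'.app ((Tr e).obj a) ≫
      W.map (homOfLE (by simp; linarith : (Tr f).obj ((Tr e).obj a) ≤ (Tr g).obj a)) := by
  rw [shiftComp, NatTrans.comp_app, NatTrans.comp_app, eqToHom_app,
    eqToHom_eq_map_homOfLE W (show (Tr f).obj ((Tr e).obj a) = (Tr g).obj a by simp; linarith)]
  rfl

theorem shiftComp_app_comp_shiftComp_app {U V W : ℝ ⥤ C} {e f g : ℝ} (he : 0 ≤ e) (hf : 0 ≤ f)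
    (hg : e + f = g) (hg' : f + e = g) (Φ : U ⟶ Tr e ⋙ V) (Ψ : V ⟶ Tr e ⋙ U)
    (Φ' : V ⟶ Tr f ⋙ W) (Ψ' : W ⟶ Tr f ⋙ V)
    (h : ∀ a : ℝ, Φ.app a ≫ Ψ.app ((Tr e).obj a) =
      U.map (homOfLE (by simp; linarith : a ≤ (Tr e).obj ((Tr e).obj a))))
    (h' : ∀ a : ℝ, Φ'.app a ≫ Ψ'.app ((Tr f).obj a) =
      V.map (homOfLE (by simp; linarith : a ≤ (Tr f).obj ((Tr f).obj a))))
    (a : ℝ) :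
    (shiftComp hg Φ Φ').app a ≫ (shiftComp hg' Ψ' Ψ).app ((Tr g).obj a) =
      U.map (homOfLE (by simp; linarith : a ≤ (Tr g).obj ((Tr g).obj a))) := by
  rw [shiftComp_app, shiftComp_app]
  simp only [Category.assoc]
  rw [reassoc_of% map_homOfLE_comp_app Ψ', reassoc_of% h', reassoc_of% map_homOfLE_comp_map_homOfLE,
    reassoc_of% map_homOfLE_comp_app Ψ, reassoc_of% h, reassoc_of% map_homOfLE_comp_map_homOfLE,
    map_homOfLE_comp_map_homOfLE]

theorem Interleaved.refl (U : ℝ ⥤ C) {e : ℝ} (he : 0 ≤ e) : Interleaved e U U :=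
  ⟨he, sigmaNat U e he, sigmaNat U e he, (isInterleaving_iff he _ _).2
    ⟨fun _ => map_homOfLE_comp_map_homOfLE U _ _, fun _ => map_homOfLE_comp_map_homOfLE U _ _⟩⟩

theorem Interleaved.symm {U V : ℝ ⥤ C} {e : ℝ} (h : Interleaved e U V) : Interleaved e V U :=
  let ⟨he, Φ, Ψ, hU, hV⟩ := h
  ⟨he, Ψ, Φ, hV, hU⟩

theorem interleaved_comm {U V : ℝ ⥤ C} {e : ℝ} : Interleaved e U V ↔ Interleaved e V U :=
  ⟨Interleaved.symm, Interleaved.symm⟩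

theorem Interleaved.trans {U V W : ℝ ⥤ C} {e f : ℝ} (h : Interleaved e U V)
    (h' : Interleaved f V W) : Interleaved (e + f) U W := by
  obtain ⟨he, Φ, Ψ, hUV⟩ := h
  obtain ⟨hf, Φ', Ψ', hVW⟩ := h'
  obtain ⟨hU, hV⟩ := (isInterleaving_iff he Φ Ψ).1 hUV
  obtain ⟨hV', hW⟩ := (isInterleaving_iff hf Φ' Ψ').1 hVW
  refine ⟨add_nonneg he hf, shiftComp rfl Φ Φ', shiftComp (add_comm f e) Ψ' Ψ,
    (isInterleaving_iff _ _ _).2 ⟨?_, ?_⟩⟩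
  · exact shiftComp_app_comp_shiftComp_app he hf rfl (add_comm f e) Φ Ψ Φ' Ψ' hU hV'
  · exact shiftComp_app_comp_shiftComp_app hf he (add_comm f e) rfl Ψ' Φ' Ψ Φ hW hV

theorem dInt_self (U : ℝ ⥤ C) : dInt U U = 0 :=
  nonpos_iff_eq_zero.1 (sInf_le ⟨0, Interleaved.refl U le_rfl, ENNReal.ofReal_zero⟩)

theorem dInt_comm (U V : ℝ ⥤ C) : dInt U V = dInt V U := by
  simp only [dInt, interleaved_comm]

theorem dInt_triangle (U V W : ℝ ⥤ C) : dInt U W ≤ dInt U V + dInt V W :=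
  ENNReal.sInf_image_ofReal_le_add fun _ hx _ hy => hx.trans hy

end

/-- The interleaving distance is an extended pseudometric on functors `ℝ ⥤ C`:
it is reflexive (`dInt U U = 0`), symmetric, and satisfies the triangle inequality. -/
theorem dInt_pseudometric {C : Type*} [Category C] (U V W : ℝ ⥤ C) :
    dInt U U = 0 ∧ dInt U V = dInt V U ∧ dInt U W ≤ dInt U V + dInt V W :=
  ⟨dInt_self U, dInt_comm U V, dInt_triangle U V W⟩

end
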